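/- Let F ⊆ V ∪ E, let t ∈ V, and let L ≥ 1 be an integer. Let H be a weighted directed graph whose vertices are vertices of V not in F, each of whose edges is of one of two types: (i) an edge (u,v) of G with u, v and (u,v) all not in F, carrying weight ω(u,v); or (ii) a shortcut edge (u,t) carrying weight d^L_G(u,t,F) (required to be finite). Let s ∈ V, and suppose ⟨v_0,…,v_m⟩ with v_0 = s and v_m = t is a minimum-weight s-to-t path among the paths in G∖F with at most L edges (so its weight is d^L_G(s,t,F)), and suppose that for every 0 ≤ i < m either (v_i, v_{i+1}) is an edge of H of type (i) or (v_i, t) is an edge of H of type (ii). Then d_G(s,t,F) ≤ d_H(s,t) ≤ d^L_G(s,t,F). -/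

import Mathlib

/-!
Lower bound: `u ↦ d_G(u,t,F)` is a feasible potential for `H`. An edge of type (i) satisfies
the triangle inequality of `G ∖ F`, and a shortcut `(u,t)` weighs `d^L_G(u,t,F) ≥ d_G(u,t,F)`;
summing along an `H`-path from `s` to `t` bounds its weight below by `d_G(s,t,F)`.

Upper bound: follow `Q` inside `H`, copying its edges of type (i). At the first vertex `v_i`
that only offers a shortcut, jump to `t` at cost `d^L_G(v_i,t,F)`, which is at most the weight
of the suffix of `Q` from `v_i`, since that suffix has at most `L` edges.
-/

open scoped ENNReal

namespace DSO

variable {V : Type*}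

/-- `p` is a walk from `u` to `w` in the graph with edge relation `E`:
a nonempty list of vertices, consecutive vertices joined by edges. -/
def IsWalk (E : V → V → Prop) (p : List V) (u w : V) : Prop :=
  p ≠ [] ∧ p.head? = some u ∧ p.getLast? = some w ∧ p.Chain' E

/-- The number of edges of a path given as a list of vertices. -/
def pathLen (p : List V) : ℕ := p.length - 1

/-- Total weight of a path, for real edge weights `w`. -/
def wt (w : V → V → ℝ) : List V → ℝ
  | [] => 0
  | [_] => 0
  | a :: b :: rest => w a b + wt w (b :: rest)

/-- Total weight of a path, for `ℝ≥0∞`-valued edge weights `w`. -/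
noncomputable def ewt (w : V → V → ℝ≥0∞) : List V → ℝ≥0∞
  | [] => 0
  | [_] => 0
  | a :: b :: rest => w a b + ewt w (b :: rest)

/-- A failure set `F ⊆ V ∪ E` is modelled as a set in `V ⊕ V × V`.
`IsFWalk E F p u w`: `p` is a `u`-to-`w` walk in `G ∖ F`, i.e. it uses no failed edge and
visits no failed vertex. -/
def IsFWalk (E : V → V → Prop) (F : Set (V ⊕ V × V)) (p : List V) (u w : V) : Prop :=
  IsWalk (fun a b => E a b ∧ Sum.inr (a, b) ∉ F) p u w ∧ ∀ x ∈ p, Sum.inl x ∉ F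

/-- `d_G(u, x, F)`: the minimum weight of a `u`-to-`x` path in `G ∖ F` (`⊤` if none). -/
noncomputable def fdist (E : V → V → Prop) (w : V → V → ℝ) (F : Set (V ⊕ V × V))
    (u x : V) : ℝ≥0∞ :=
  sInf ((fun p => ENNReal.ofReal (wt w p)) '' {p | IsFWalk E F p u x})

/-- `d^L_G(u, x, F)`: the minimum weight of a `u`-to-`x` path in `G ∖ F` containing at most
`L` edges (`⊤` if none). -/
noncomputable def fdistL (E : V → V → Prop) (w : V → V → ℝ) (F : Set (V ⊕ V × V))
    (L : ℕ) (u x : V) : ℝ≥0∞ :=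
  sInf ((fun p => ENNReal.ofReal (wt w p)) '' {p | IsFWalk E F p u x ∧ pathLen p ≤ L})

/-- Weighted distance in an abstract `ℝ≥0∞`-weighted digraph `(E, w)`. -/
noncomputable def ewdist (E : V → V → Prop) (w : V → V → ℝ≥0∞) (u x : V) : ℝ≥0∞ :=
  sInf ((fun p => ewt w p) '' {p | IsWalk E p u x})

/-- `𝒟_f`: the family of all contiguous subpaths with exactly `L` edges of the (unique)
shortest paths `P_G(s,t,F)`, over all `s, t ∈ V` and all `F ⊆ V ∪ E` with `|F| ≤ f`. -/
def Dfam (E : V → V → Prop) (w : V → V → ℝ) (f L : ℕ) : Set (List V) :=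
  {Q | ∃ (s t : V) (F : Set (V ⊕ V × V)) (Pst : List V),
      F.Finite ∧ F.ncard ≤ f ∧
      IsFWalk E F Pst s t ∧ ENNReal.ofReal (wt w Pst) = fdist E w F s t ∧
      Q <:+: Pst ∧ pathLen Q = L ∧ Q ≠ []}

end DSO

namespace DSO

variable {V : Type*}

section Walks

variable {E : V → V → Prop} {a b u v : V} {p : List V}

theorem isWalk_singleton_iff : IsWalk E [a] u v ↔ a = u ∧ a = v := by
  refine ⟨fun h => ⟨Option.some.inj h.2.1, Option.some.inj h.2.2.1⟩, ?_⟩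
  rintro ⟨rfl, rfl⟩
  exact ⟨List.cons_ne_nil _ _, rfl, rfl, List.isChain_singleton a⟩

theorem isWalk_cons_cons_iff :
    IsWalk E (a :: b :: p) u v ↔ a = u ∧ E a b ∧ IsWalk E (b :: p) b v := by
  rw [IsWalk, IsWalk, List.getLast?_cons_cons]
  constructor
  · rintro ⟨-, hu, hv, hc⟩
    exact ⟨Option.some.inj hu, (List.isChain_cons_cons.1 hc).1, List.cons_ne_nil _ _, rfl, hv,
      (List.isChain_cons_cons.1 hc).2⟩
  · rintro ⟨rfl, hab, -, -, hv, hc⟩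
    exact ⟨List.cons_ne_nil _ _, rfl, hv, List.isChain_cons_cons.2 ⟨hab, hc⟩⟩

theorem IsWalk.cons (hab : E a b) (hp : IsWalk E p b v) : IsWalk E (a :: p) a v := by
  obtain _ | ⟨b', p⟩ := p
  · exact absurd rfl hp.1
  · obtain rfl : b' = b := Option.some.inj hp.2.1
    exact isWalk_cons_cons_iff.2 ⟨rfl, hab, hp⟩

variable {F : Set (V ⊕ V × V)}

theorem IsFWalk.cons (hab : E a b) (habF : Sum.inr (a, b) ∉ F) (haF : Sum.inl a ∉ F)
    (hp : IsFWalk E F p b v) : IsFWalk E F (a :: p) a v :=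
  ⟨hp.1.cons ⟨hab, habF⟩, List.forall_mem_cons.2 ⟨haF, hp.2⟩⟩

theorem IsFWalk.tail (h : IsFWalk E F (a :: b :: p) u v) : IsFWalk E F (b :: p) b v :=
  ⟨(isWalk_cons_cons_iff.1 h.1).2.2, fun x hx => h.2 x (List.mem_cons_of_mem a hx)⟩

theorem IsFWalk.target_notMem (h : IsFWalk E F p u v) : Sum.inl v ∉ F :=
  h.2 v (List.mem_of_getLast? h.1.2.2.1)

end Walks

section Weights

variable {w : V → V → ℝ}

theorem wt_nonneg (hw : ∀ a b, 0 ≤ w a b) : ∀ p : List V, 0 ≤ wt w p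
  | [] | [_] => le_rfl
  | a :: b :: p => add_nonneg (hw a b) (wt_nonneg hw (b :: p))

theorem ofReal_wt_cons_cons (hw : ∀ a b, 0 ≤ w a b) (a b : V) (p : List V) :
    ENNReal.ofReal (wt w (a :: b :: p)) =
      ENNReal.ofReal (w a b) + ENNReal.ofReal (wt w (b :: p)) :=
  ENNReal.ofReal_add (hw a b) (wt_nonneg hw _)

end Weights

section Distances

variable {E : V → V → Prop} {w : V → V → ℝ} {F : Set (V ⊕ V × V)} {L : ℕ} {a b u v : V}
  {p : List V}

theorem fdist_le_ofReal_wt (hp : IsFWalk E F p u v) :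
    fdist E w F u v ≤ ENNReal.ofReal (wt w p) :=
  sInf_le ⟨p, hp, rfl⟩

theorem fdistL_le_ofReal_wt (hp : IsFWalk E F p u v) (hpL : pathLen p ≤ L) :
    fdistL E w F L u v ≤ ENNReal.ofReal (wt w p) :=
  sInf_le ⟨p, ⟨hp, hpL⟩, rfl⟩

theorem fdist_le_fdistL : fdist E w F u v ≤ fdistL E w F L u v :=
  sInf_le_sInf (Set.image_mono fun _ hp => hp.1)

theorem fdist_self_eq_zero (hv : Sum.inl v ∉ F) : fdist E w F v v = 0 :=
  have hp : IsFWalk E F [v] v v := ⟨isWalk_singleton_iff.2 ⟨rfl, rfl⟩, by simpa using hv⟩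
  nonpos_iff_eq_zero.1 <| (fdist_le_ofReal_wt hp).trans_eq ENNReal.ofReal_zero

theorem fdist_le_add (hab : E a b) (habF : Sum.inr (a, b) ∉ F) (haF : Sum.inl a ∉ F) (v : V) :
    fdist E w F a v ≤ ENNReal.ofReal (w a b) + fdist E w F b v := by
  conv_rhs => rw [fdist, sInf_image, ENNReal.add_iInf₂]
  refine le_iInf₂ fun p hp => ?_
  obtain _ | ⟨b', p⟩ := p
  · exact absurd rfl hp.1.1
  · obtain rfl : b' = b := Option.some.inj hp.1.2.1
    exact (fdist_le_ofReal_wt (hp.cons hab habF haF)).trans ENNReal.ofReal_add_le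

end Distances

section HDistances

variable {EH : V → V → Prop} {wH : V → V → ℝ≥0∞} {a b u v : V} {p : List V}

theorem ewdist_le_ewt (hp : IsWalk EH p u v) : ewdist EH wH u v ≤ ewt wH p :=
  sInf_le ⟨p, hp, rfl⟩

theorem ewdist_le_add (hab : EH a b) (v : V) :
    ewdist EH wH a v ≤ wH a b + ewdist EH wH b v := by
  conv_rhs => rw [ewdist, sInf_image, ENNReal.add_iInf₂]
  refine le_iInf₂ fun p hp => ?_
  obtain _ | ⟨b', p⟩ := p
  · exact absurd rfl hp.1
  · obtain rfl : b' = b := Option.some.inj hp.2.1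
    exact ewdist_le_ewt (hp.cons hab)

variable {φ : V → ℝ≥0∞}

theorem IsWalk.le_ewt_add (hφ : ∀ a b, EH a b → φ a ≤ wH a b + φ b) :
    ∀ {p : List V} {u : V}, IsWalk EH p u v → φ u ≤ ewt wH p + φ v
  | [], _, hp => absurd rfl hp.1
  | [_], _, hp => by
      obtain ⟨rfl, rfl⟩ := isWalk_singleton_iff.1 hp
      simp [ewt]
  | a :: b :: p, _, hp => by
      obtain ⟨rfl, hab, hp⟩ := isWalk_cons_cons_iff.1 hp
      calc φ a ≤ wH a b + φ b := hφ a b hab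
        _ ≤ wH a b + (ewt wH (b :: p) + φ v) := by gcongr; exact hp.le_ewt_add hφ
        _ = ewt wH (a :: b :: p) + φ v := (add_assoc _ _ _).symm

theorem le_ewdist_add (hφ : ∀ a b, EH a b → φ a ≤ wH a b + φ b) (u v : V) :
    φ u ≤ ewdist EH wH u v + φ v := by
  rw [ewdist, sInf_image, ENNReal.iInf₂_add]
  exact le_iInf₂ fun p hp => hp.le_ewt_add hφ

end HDistances

theorem ewdist_le_ofReal_wt {E EH : V → V → Prop} {w : V → V → ℝ} {wH : V → V → ℝ≥0∞}
    {F : Set (V ⊕ V × V)} {L : ℕ} {t : V} (hw : ∀ a b, 0 ≤ w a b) :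
    ∀ {q : List V} {u : V}, IsFWalk E F q u t → pathLen q ≤ L →
      q.IsChain (fun a b => (EH a b ∧ wH a b ≤ ENNReal.ofReal (w a b)) ∨
        (EH a t ∧ wH a t ≤ fdistL E w F L a t)) →
      ewdist EH wH u t ≤ ENNReal.ofReal (wt w q)
  | [], _, hq, _, _ => absurd rfl hq.1.1
  | [_], _, hq, _, _ => by
      obtain ⟨rfl, rfl⟩ := isWalk_singleton_iff.1 hq.1
      exact (ewdist_le_ewt (isWalk_singleton_iff.2 ⟨rfl, rfl⟩)).trans (by simp [ewt])
  | a :: b :: q, _, hq, hqL, hchain => by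
      obtain ⟨rfl, -, -⟩ := isWalk_cons_cons_iff.1 hq.1
      obtain ⟨hstep | ⟨hat, hshort⟩, hchain⟩ := List.isChain_cons_cons.1 hchain
      · have hqL' : pathLen (b :: q) ≤ L := by
          simp only [pathLen, List.length_cons] at hqL ⊢; omega
        calc ewdist EH wH a t ≤ wH a b + ewdist EH wH b t := ewdist_le_add hstep.1 t
          _ ≤ ENNReal.ofReal (w a b) + ENNReal.ofReal (wt w (b :: q)) :=
              add_le_add hstep.2 (ewdist_le_ofReal_wt hw hq.tail hqL' hchain)
          _ = ENNReal.ofReal (wt w (a :: b :: q)) := (ofReal_wt_cons_cons hw a b q).symm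
      · calc ewdist EH wH a t ≤ ewt wH [a, t] :=
              ewdist_le_ewt ((isWalk_singleton_iff.2 ⟨rfl, rfl⟩).cons hat)
          _ = wH a t := by simp [ewt]
          _ ≤ fdistL E w F L a t := hshort
          _ ≤ ENNReal.ofReal (wt w (a :: b :: q)) := fdistL_le_ofReal_wt hq hqL

end DSO

theorem stmt15_general {V : Type*}
    (E : V → V → Prop) (w : V → V → ℝ) (hw : ∀ a b, 0 ≤ w a b)
    (F : Set (V ⊕ V × V)) (t : V) (L : ℕ)
    (EH : V → V → Prop) (wH : V → V → ℝ≥0∞)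
    (hH : ∀ a b, EH a b → Sum.inl a ∉ F ∧ Sum.inl b ∉ F ∧
      ((E a b ∧ Sum.inr (a, b) ∉ F ∧ wH a b = ENNReal.ofReal (w a b)) ∨
        (b = t ∧ wH a b = DSO.fdistL E w F L a t ∧ DSO.fdistL E w F L a t ≠ ⊤)))
    (s : V) (Q : List V)
    (hQ : DSO.IsFWalk E F Q s t) (hQL : DSO.pathLen Q ≤ L)
    (hQmin : ENNReal.ofReal (DSO.wt w Q) = DSO.fdistL E w F L s t)
    (hseq : ∀ i, i + 1 < Q.length → ∃ a b, Q[i]? = some a ∧ Q[i + 1]? = some b ∧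
      ((EH a b ∧ E a b ∧ Sum.inr (a, b) ∉ F ∧ wH a b = ENNReal.ofReal (w a b)) ∨
        (EH a t ∧ wH a t = DSO.fdistL E w F L a t ∧ DSO.fdistL E w F L a t ≠ ⊤))) :
    DSO.fdist E w F s t ≤ DSO.ewdist EH wH s t ∧
    DSO.ewdist EH wH s t ≤ DSO.fdistL E w F L s t := by
  have ht : Sum.inl t ∉ F := hQ.target_notMem
  refine ⟨?_, ?_⟩
  · have hpot : ∀ a b, EH a b → DSO.fdist E w F a t ≤ wH a b + DSO.fdist E w F b t := by
      intro a b hab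
      obtain ⟨ha, -, ⟨hE, hF, hwab⟩ | ⟨rfl, hwab, -⟩⟩ := hH a b hab
      · exact hwab ▸ DSO.fdist_le_add hE hF ha _
      · exact hwab ▸ DSO.fdist_le_fdistL.trans le_self_add
    simpa [DSO.fdist_self_eq_zero ht] using DSO.le_ewdist_add hpot s t
  · refine hQmin ▸ DSO.ewdist_le_ofReal_wt hw hQ hQL (List.isChain_iff_getElem.2 fun i hi => ?_)
    obtain ⟨a, b, ha, hb, hstep | ⟨hat, hshort, -⟩⟩ := hseq i hi
    all_goals
      rw [List.getElem?_eq_getElem (by omega), Option.some_inj] at ha hb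
      subst ha hb
    · exact .inl ⟨hstep.1, hstep.2.2.2.le⟩
    · exact .inr ⟨hat, hshort.le⟩

/-- Let `H` be a weighted digraph whose vertices avoid `F` and whose edges
are either (i) surviving edges of `G` with their original weights, or (ii) shortcut edges
`(u,t)` of (finite) weight `d^L_G(u,t,F)`. If `⟨v_0,…,v_m⟩ = Q` is a minimum-weight `s`-to-`t`
path among paths in `G∖F` with at most `L` edges, and for every `0 ≤ i < m` either
`(v_i, v_{i+1})` is an edge of `H` of type (i) or `(v_i, t)` is an edge of `H` of type (ii),
then `d_G(s,t,F) ≤ d_H(s,t) ≤ d^L_G(s,t,F)`. -/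
theorem stmt15 {V : Type*} [Fintype V]
    (E : V → V → Prop) (w : V → V → ℝ) (hw : ∀ a b, 0 ≤ w a b)
    (F : Set (V ⊕ V × V)) (t : V) (L : ℕ) (hL : 1 ≤ L)
    (EH : V → V → Prop) (wH : V → V → ℝ≥0∞)
    (hH : ∀ a b, EH a b → Sum.inl a ∉ F ∧ Sum.inl b ∉ F ∧
      ((E a b ∧ Sum.inr (a, b) ∉ F ∧ wH a b = ENNReal.ofReal (w a b)) ∨
        (b = t ∧ wH a b = DSO.fdistL E w F L a t ∧ DSO.fdistL E w F L a t ≠ ⊤)))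
    (s : V) (Q : List V)
    (hQ : DSO.IsFWalk E F Q s t) (hQL : DSO.pathLen Q ≤ L)
    (hQmin : ENNReal.ofReal (DSO.wt w Q) = DSO.fdistL E w F L s t)
    (hseq : ∀ i, i + 1 < Q.length → ∃ a b, Q[i]? = some a ∧ Q[i + 1]? = some b ∧
      ((EH a b ∧ E a b ∧ Sum.inr (a, b) ∉ F ∧ wH a b = ENNReal.ofReal (w a b)) ∨
        (EH a t ∧ wH a t = DSO.fdistL E w F L a t ∧ DSO.fdistL E w F L a t ≠ ⊤))) :
    DSO.fdist E w F s t ≤ DSO.ewdist EH wH s t ∧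
    DSO.ewdist EH wH s t ≤ DSO.fdistL E w F L s t :=
  stmt15_general E w hw F t L EH wH hH s Q hQ hQL hQmin hseq
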